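/- Let f, g ∈ C(𝒩). If F(ω) · conj(G(ω)) is a real number for every ω ∈ L, then the cross-correlation C_{f,g}(n) = ∑_{m∈ℤ^d} f(m+n) · conj(g(m)) satisfies C_{f,g}(n) = conj(C_{f,g}(−n)) for every n ∈ ℤ^d; equivalently, the Laurent polynomial identity F(z) · conj(G)(1/z̄) = conj(F)(1/z̄) · G(z) holds. -/

import Mathlib

/-!
The cross-correlation `C = C_{f,g}` is supported in the centred box `|n_j| ≤ N_j`, and its
Fourier transform is `F · conj G`. A trigonometric polynomial with frequencies in that box is
recovered exactly from its samples on `L`: the discrete inversion sum over `L` reproduces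
`|L| · C(n)`, because two frequencies of the box that are congruent modulo `2N_j + 1` in every
coordinate coincide. If the samples are real, conjugating the inversion sum for `-n` gives the
one for `n`, so `C(n) = conj C(-n)`.
-/

open Complex

/-- The box `𝒩 = {n ∈ ℤ^d : 0 ≤ n_j ≤ N_j}`. -/
def inBox {d : ℕ} (N : Fin d → ℕ) (n : Fin d → ℤ) : Prop :=
  ∀ j, 0 ≤ n j ∧ n j ≤ (N j : ℤ)

/-- Membership in the sampling lattice `L`. -/
def inLattice {d : ℕ} (N : Fin d → ℕ) (ω : Fin d → ℝ) : Prop :=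
  ∀ j, ∃ k : ℕ, k ≤ 2 * N j ∧ ω j = (k : ℝ) / (2 * N j + 1)

/-- The Fourier transform `Φg(ω) = ∑_{n∈ℤ^d} g(n) e^{−2πi ω·n}` of a finitely
supported array. -/
noncomputable def phiZ {d : ℕ} (g : (Fin d → ℤ) → ℂ) (ω : Fin d → ℝ) : ℂ :=
  ∑ᶠ n : Fin d → ℤ, g n *
    Complex.exp (-(2 * Real.pi * Complex.I) * ((∑ j, ω j * ((n j : ℤ) : ℝ) : ℝ) : ℂ))

/-- The cross-correlation `C_{f,g}(n) = ∑_{m∈ℤ^d} f(m+n) conj(g(m))`. -/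
noncomputable def crossCorr {d : ℕ} (f g : (Fin d → ℤ) → ℂ) (n : Fin d → ℤ) : ℂ :=
  ∑ᶠ m : Fin d → ℤ, f (m + n) * (starRingEnd ℂ) (g m)

open Finset Function ComplexConjugate
open scoped Pointwise

lemma IsPrimitiveRoot.sum_range_pow_zpow {K : Type*} [Field K] {ζ : K} {M : ℕ}
    (hζ : IsPrimitiveRoot ζ M) (r : ℤ) :
    ∑ x ∈ range M, (ζ ^ r) ^ x = if (M : ℤ) ∣ r then (M : K) else 0 := by
  split_ifs with hr
  · simp [(hζ.zpow_eq_one_iff_dvd r).mpr hr]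
  · have hne : ζ ^ r - 1 ≠ 0 := sub_ne_zero.mpr fun h => hr ((hζ.zpow_eq_one_iff_dvd r).mp h)
    have hpow : (ζ ^ r) ^ M = 1 := by
      rw [← zpow_natCast, ← zpow_mul, mul_comm, zpow_mul, zpow_natCast, hζ.pow_eq_one, one_zpow]
    refine (mul_eq_zero.mp ?_).resolve_right hne
    rw [geom_sum_mul, hpow, sub_self]

section

variable {d : ℕ}

noncomputable def fourierKernel (ω : Fin d → ℝ) : AddChar (Fin d → ℤ) ℂ where
  toFun n := exp (-(2 * Real.pi * I) * ((∑ j, ω j * ((n j : ℤ) : ℝ) : ℝ) : ℂ))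
  map_zero_eq_one' := by simp
  map_add_eq_mul' m n := by
    rw [← exp_add, ← mul_add]
    push_cast
    simp only [Pi.add_apply, Int.cast_add, mul_add, sum_add_distrib]

lemma phiZ_eq_finsum (g : (Fin d → ℤ) → ℂ) (ω : Fin d → ℝ) :
    phiZ g ω = ∑ᶠ n, g n * fourierKernel ω n := rfl

lemma conj_fourierKernel (ω : Fin d → ℝ) (n : Fin d → ℤ) :
    conj (fourierKernel ω n) = fourierKernel ω (-n) := by
  simp only [fourierKernel, AddChar.coe_mk, ← exp_conj, map_mul, map_neg, map_ofNat, conj_I,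
    conj_ofReal, Pi.neg_apply, Int.cast_neg, mul_neg, sum_neg_distrib, ofReal_neg]
  ring_nf

lemma phiZ_eq_sum_of_support_subset {g : (Fin d → ℤ) → ℂ} {s : Finset (Fin d → ℤ)}
    (hs : support g ⊆ s) (ω : Fin d → ℝ) :
    phiZ g ω = ∑ n ∈ s, g n * fourierKernel ω n :=
  finsum_eq_sum_of_support_subset _ ((support_mul_subset_left _ _).trans hs)

lemma support_crossCorr_subset (f g : (Fin d → ℤ) → ℂ) :
    support (crossCorr f g) ⊆ support f - support g := by
  intro n hn
  obtain ⟨m, hm⟩ : ∃ m, f (m + n) * conj (g m) ≠ 0 := by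
    by_contra! h
    exact hn (finsum_eq_zero_of_forall_eq_zero h)
  exact ⟨m + n, left_ne_zero_of_mul hm, m, fun h0 => hm (by simp [h0]), add_sub_cancel_left m n⟩

lemma phiZ_crossCorr {f g : (Fin d → ℤ) → ℂ} (hf : HasFiniteSupport f)
    (hg : HasFiniteSupport g) (ω : Fin d → ℝ) :
    phiZ (crossCorr f g) ω = phiZ f ω * conj (phiZ g ω) := by
  let F : (Fin d → ℤ) × (Fin d → ℤ) → ℂ := fun p =>
    f p.1 * conj (g p.2) * fourierKernel ω (p.1 - p.2)
  have hF : HasFiniteSupport F := (Set.Finite.prod hf hg).subset fun p hp =>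
    ⟨left_ne_zero_of_mul (left_ne_zero_of_mul hp), fun h0 => hp (by simp [F, h0])⟩
  let e : (Fin d → ℤ) × (Fin d → ℤ) ≃ (Fin d → ℤ) × (Fin d → ℤ) :=
    { toFun := fun p => (p.2 + p.1, p.2)
      invFun := fun p => (p.1 - p.2, p.2)
      left_inv := fun p => by simp
      right_inv := fun p => by simp }
  have hconj : conj (phiZ g ω) = ∑ᶠ b, conj (g b) * fourierKernel ω (-b) := by
    rw [phiZ_eq_finsum, starRingEnd_apply, ← starAddEquiv_apply, AddEquivClass.map_finsum]
    refine finsum_congr fun b => ?_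
    rw [starAddEquiv_apply, ← starRingEnd_apply, map_mul, conj_fourierKernel]
  calc phiZ (crossCorr f g) ω = ∑ᶠ n, ∑ᶠ b, F (e (n, b)) := by
        rw [phiZ_eq_finsum]
        refine finsum_congr fun n => ?_
        rw [crossCorr, finsum_mul]
        exact finsum_congr fun b => by simp only [F, e, Equiv.coe_fn_mk, add_sub_cancel_left]
    _ = ∑ᶠ q, F (e q) := (finsum_curry _ (hF.comp_of_injective e.injective)).symm
    _ = ∑ᶠ p, F p := finsum_comp_equiv e
    _ = ∑ᶠ a, ∑ᶠ b, F (a, b) := finsum_curry F hF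
    _ = phiZ f ω * conj (phiZ g ω) := by
        rw [hconj, phiZ_eq_finsum, finsum_mul]
        refine finsum_congr fun a => ?_
        rw [mul_finsum]
        refine finsum_congr fun b => ?_
        simp only [F, sub_eq_add_neg, AddChar.map_add_eq_mul]
        ring

noncomputable def samplePoint (M : Fin d → ℕ) (k : ∀ j, Fin (M j)) : Fin d → ℝ :=
  fun j => (k j : ℝ) / M j

lemma fourierKernel_samplePoint (M : Fin d → ℕ) (k : ∀ j, Fin (M j)) (r : Fin d → ℤ) :
    fourierKernel (samplePoint M k) r =
      ∏ j, (exp (2 * Real.pi * I / M j) ^ (-r j)) ^ (k j : ℕ) := by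
  simp only [fourierKernel, AddChar.coe_mk, samplePoint, ← exp_int_mul, ← exp_nat_mul,
    ← exp_sum]
  congr 1
  push_cast
  rw [mul_sum]
  refine sum_congr rfl fun j _ => ?_
  ring

lemma sum_fourierKernel_samplePoint (M : Fin d → ℕ) (hM : ∀ j, M j ≠ 0) (r : Fin d → ℤ) :
    ∑ k : ∀ j, Fin (M j), fourierKernel (samplePoint M k) r =
      if ∀ j, (M j : ℤ) ∣ r j then ∏ j, (M j : ℂ) else 0 := by
  simp only [fourierKernel_samplePoint]
  rw [← Fintype.prod_sum fun j (x : Fin (M j)) => (exp (2 * Real.pi * I / M j) ^ (-r j)) ^ (x : ℕ)]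
  have h1d (j : Fin d) : ∑ x : Fin (M j), (exp (2 * Real.pi * I / M j) ^ (-r j)) ^ (x : ℕ) =
      if (M j : ℤ) ∣ r j then (M j : ℂ) else 0 := by
    rw [Fin.sum_univ_eq_sum_range (fun x => (exp (2 * Real.pi * I / M j) ^ (-r j)) ^ x),
      (isPrimitiveRoot_exp _ (hM j)).sum_range_pow_zpow]
    simp only [dvd_neg]
  simp only [h1d]
  -- the two sides differ only in the `Decidable` instance of `∀ j, _`
  convert Fintype.prod_ite_zero

lemma sum_fourierKernel_samplePoint_mul_phiZ (M : Fin d → ℕ) (hM : ∀ j, M j ≠ 0)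
    {h : (Fin d → ℤ) → ℂ} {s : Finset (Fin d → ℤ)} (hs : support h ⊆ s) {n : Fin d → ℤ}
    (hn : ∀ m ∈ s, ∀ j, |m j - n j| < M j) :
    ∑ k : ∀ j, Fin (M j), fourierKernel (samplePoint M k) (-n) * phiZ h (samplePoint M k) =
      (∏ j, (M j : ℂ)) * h n := by
  have horth : ∀ m ∈ s, ∑ k : ∀ j, Fin (M j), fourierKernel (samplePoint M k) (m - n) =
      if m = n then ∏ j, (M j : ℂ) else 0 := by
    intro m hm
    rw [sum_fourierKernel_samplePoint M hM]
    refine if_congr ⟨fun hdvd => funext fun j => ?_, ?_⟩ rfl rfl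
    · exact sub_eq_zero.mp (Int.eq_zero_of_abs_lt_dvd (hdvd j) (hn m hm j))
    · rintro rfl j
      simp
  calc ∑ k : ∀ j, Fin (M j), fourierKernel (samplePoint M k) (-n) * phiZ h (samplePoint M k)
      = ∑ m ∈ s, h m * ∑ k : ∀ j, Fin (M j), fourierKernel (samplePoint M k) (m - n) := by
        simp only [phiZ_eq_sum_of_support_subset hs, mul_sum, sub_eq_neg_add,
          AddChar.map_add_eq_mul]
        rw [sum_comm]
        exact sum_congr rfl fun m _ => sum_congr rfl fun k _ => by ring
    _ = ∑ m ∈ s, h m * if m = n then ∏ j, (M j : ℂ) else 0 :=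
        sum_congr rfl fun m hm => by rw [horth m hm]
    _ = (∏ j, (M j : ℂ)) * h n := by
        simp only [mul_ite, mul_zero, sum_ite_eq']
        split_ifs with hns
        · ring
        · rw [notMem_support.mp fun hn => hns (hs hn), mul_zero]

lemma inLattice_samplePoint (N : Fin d → ℕ) (k : ∀ j, Fin (2 * N j + 1)) :
    inLattice N (samplePoint (fun j => 2 * N j + 1) k) :=
  fun j => ⟨k j, Nat.lt_succ_iff.mp (k j).isLt, by simp [samplePoint]⟩

lemma eq_conj_neg_of_im_phiZ_eq_zero {N : Fin d → ℕ} {h : (Fin d → ℤ) → ℂ}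
    (hs : ∀ n, h n ≠ 0 → ∀ j, |n j| ≤ N j) (hreal : ∀ ω, inLattice N ω → (phiZ h ω).im = 0)
    (n : Fin d → ℤ) : h n = conj (h (-n)) := by
  by_cases hn : ∀ j, |n j| ≤ N j
  swap
  · have hneg : ¬ ∀ j, |(-n) j| ≤ N j := by simpa using hn
    rw [Not.imp_symm (hs n) hn, Not.imp_symm (hs (-n)) hneg, map_zero]
  set M : Fin d → ℕ := fun j => 2 * N j + 1
  have hM (j : Fin d) : M j ≠ 0 := Nat.succ_ne_zero _
  set s : Finset (Fin d → ℤ) := Fintype.piFinset fun j => Icc (-(N j : ℤ)) (N j)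
  have hsupp : support h ⊆ s := fun m hm =>
    Fintype.mem_piFinset.mpr fun j => mem_Icc.mpr (abs_le.mp (hs m hm j))
  have hinv {n : Fin d → ℤ} (hn : ∀ j, |n j| ≤ N j) :
      ∑ k : ∀ j, Fin (M j), fourierKernel (samplePoint M k) (-n) * phiZ h (samplePoint M k) =
        (∏ j, (M j : ℂ)) * h n :=
    sum_fourierKernel_samplePoint_mul_phiZ M hM hsupp fun m hm j => by
      have hmj := mem_Icc.mp (Fintype.mem_piFinset.mp hm j)
      have hnj := abs_le.mp (hn j)
      rw [abs_lt]
      simp only [M]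
      push_cast
      omega
  have hconj (k : ∀ j, Fin (M j)) : conj (phiZ h (samplePoint M k)) = phiZ h (samplePoint M k) :=
    conj_eq_iff_im.mpr (hreal _ (inLattice_samplePoint N k))
  have hcard : (∏ j, (M j : ℂ)) ≠ 0 := prod_ne_zero_iff.mpr fun j _ => Nat.cast_ne_zero.mpr (hM j)
  refine mul_left_cancel₀ hcard ?_
  calc (∏ j, (M j : ℂ)) * h n
      = ∑ k : ∀ j, Fin (M j), fourierKernel (samplePoint M k) (-n) * phiZ h (samplePoint M k) :=
        (hinv hn).symm
    _ = conj (∑ k : ∀ j, Fin (M j),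
          fourierKernel (samplePoint M k) (-(-n)) * phiZ h (samplePoint M k)) := by
        simp only [map_sum, map_mul, conj_fourierKernel, hconj, neg_neg]
    _ = (∏ j, (M j : ℂ)) * conj (h (-n)) := by
        rw [hinv (by simpa using hn), map_mul, map_prod]
        simp only [map_natCast]

lemma hasFiniteSupport_of_inBox {N : Fin d → ℕ} {f : (Fin d → ℤ) → ℂ}
    (hf : ∀ n, ¬ inBox N n → f n = 0) : HasFiniteSupport f :=
  (Fintype.piFinset fun j => Icc 0 (N j : ℤ)).finite_toSet.subset fun n hn =>
    Fintype.mem_piFinset.mpr fun j => mem_Icc.mpr (Not.imp_symm (hf n) hn j)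

lemma abs_le_of_crossCorr_ne_zero {N : Fin d → ℕ} {f g : (Fin d → ℤ) → ℂ}
    (hf : ∀ n, ¬ inBox N n → f n = 0) (hg : ∀ n, ¬ inBox N n → g n = 0) (n : Fin d → ℤ)
    (hn : crossCorr f g n ≠ 0) (j : Fin d) : |n j| ≤ N j := by
  obtain ⟨a, ha, b, hb, rfl⟩ := support_crossCorr_subset f g hn
  have haj := Not.imp_symm (hf a) ha j
  have hbj := Not.imp_symm (hg b) hb j
  show |a j - b j| ≤ N j
  rw [abs_le]
  omega

end

theorem real_cross_spectrum_implies_hermitian_cross_correlation_general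
    (d : ℕ) (N : Fin d → ℕ)
    (f g : (Fin d → ℤ) → ℂ)
    (hfsupp : ∀ n, ¬ inBox N n → f n = 0)
    (hgsupp : ∀ n, ¬ inBox N n → g n = 0)
    (hreal : ∀ ω : Fin d → ℝ, inLattice N ω →
      (phiZ f ω * (starRingEnd ℂ) (phiZ g ω)).im = 0) :
    ∀ n : Fin d → ℤ, crossCorr f g n = (starRingEnd ℂ) (crossCorr f g (-n)) := by
  refine eq_conj_neg_of_im_phiZ_eq_zero (abs_le_of_crossCorr_ne_zero hfsupp hgsupp) fun ω hω => ?_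
  rw [phiZ_crossCorr (hasFiniteSupport_of_inBox hfsupp) (hasFiniteSupport_of_inBox hgsupp)]
  exact hreal ω hω

/-- If `F(ω)·conj(G(ω))` is real for every `ω ∈ L`, then the
cross-correlation satisfies `C_{f,g}(n) = conj(C_{f,g}(−n))` for every `n ∈ ℤ^d`. -/
theorem real_cross_spectrum_implies_hermitian_cross_correlation
    (d : ℕ) (hd : 1 ≤ d) (N : Fin d → ℕ) (hN : ∀ j, 1 ≤ N j)
    (f g : (Fin d → ℤ) → ℂ)
    (hfsupp : ∀ n, ¬ inBox N n → f n = 0)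
    (hgsupp : ∀ n, ¬ inBox N n → g n = 0)
    (hreal : ∀ ω : Fin d → ℝ, inLattice N ω →
      (phiZ f ω * (starRingEnd ℂ) (phiZ g ω)).im = 0) :
    ∀ n : Fin d → ℤ, crossCorr f g n = (starRingEnd ℂ) (crossCorr f g (-n)) :=
  real_cross_spectrum_implies_hermitian_cross_correlation_general d N f g hfsupp hgsupp hreal
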